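/- In the category of commutative R-algebras, the diagram consisting of the map R[X_1,...,X_n]/(X_1^2,...,X_n^2) → R[X_1,...,X_{n+1}]/(X_1^2,...,X_{n+1}^2) induced by X_i ↦ X_i (for i ≤ n), X_{n+1} ↦ 0, followed by the two parallel maps id and the endomorphism sending X_{n+1} ↦ 0 (and X_i ↦ X_i for i ≤ n) of R[X_1,...,X_{n+1}]/(X_1^2,...,X_{n+1}^2), is an equalizer diagram. -/

import Mathlib

/-!
Setting `X_{n+1} = 0` gives a retraction `r : W_{D^{n+1}} → W_{D^n}` of `φ`, and `ψ = φ ∘ r`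
because both sides agree on the generators. So `ψ` is a split idempotent: `φ` is injective, and
the fixed points of `φ ∘ r` are exactly the image of `φ`.
-/

set_option synthInstance.maxHeartbeats 1000000
set_option maxHeartbeats 1000000

/-- The ideal `(X₁²,...,Xₙ²)` of `R[X₁,...,Xₙ]`. -/
noncomputable abbrev sqIdeal (R : Type*) [CommRing R] (n : ℕ) : Ideal (MvPolynomial (Fin n) R) :=
  Ideal.span (Set.range fun i : Fin n => (MvPolynomial.X i : MvPolynomial (Fin n) R) ^ 2)

/-- The Weil algebra `W_{D^n} = R[X₁,...,Xₙ]/(X₁²,...,Xₙ²)`. -/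
abbrev WeilDpow (R : Type*) [CommRing R] (n : ℕ) : Type _ :=
  MvPolynomial (Fin n) R ⧸ sqIdeal R n

theorem Function.LeftInverse.apply_eq_self_iff_mem_range {α β : Type*} {f : β → α} {g : α → β}
    (h : Function.LeftInverse f g) (b : β) : g (f b) = b ↔ b ∈ Set.range g :=
  ⟨fun hb => ⟨f b, hb⟩, fun hb => h.rightInvOn_range hb⟩

namespace WeilDpow

variable {R : Type*} [CommRing R] {n : ℕ}

noncomputable abbrev X (i : Fin n) : WeilDpow R n :=
  Ideal.Quotient.mk (sqIdeal R n) (MvPolynomial.X i)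

theorem X_sq (i : Fin n) : (X i : WeilDpow R n) ^ 2 = 0 := by
  rw [← map_pow, Ideal.Quotient.eq_zero_iff_mem]
  exact Ideal.subset_span ⟨i, rfl⟩

theorem algHom_ext {A : Type*} [Semiring A] [Algebra R A] {f g : WeilDpow R n →ₐ[R] A}
    (h : ∀ i, f (X i) = g (X i)) : f = g :=
  Ideal.Quotient.algHom_ext R (MvPolynomial.algHom_ext h)

section lift

variable {A : Type*} [CommRing A] [Algebra R A] (x : Fin n → A) (hx : ∀ i, x i ^ 2 = 0)

noncomputable def lift : WeilDpow R n →ₐ[R] A :=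
  Ideal.Quotient.liftₐ _ (MvPolynomial.aeval x) fun _ hp => by
    rw [← RingHom.mem_ker]
    refine Ideal.span_le.2 ?_ hp
    rintro _ ⟨i, rfl⟩
    simp [hx i]

@[simp]
theorem lift_X (i : Fin n) : lift x hx (X i : WeilDpow R n) = x i :=
  MvPolynomial.aeval_X x i

end lift

variable (R n) in
/-- The map `W_{D^{n+1}} → W_{D^n}` dual to the inclusion `D^n → D^{n+1}`, `d ↦ (d, 0)`. -/
noncomputable def restrict : WeilDpow R (n + 1) →ₐ[R] WeilDpow R n :=
  lift (Fin.lastCases 0 X) fun i => by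
    induction i using Fin.lastCases with
    | last => simp
    | cast i => simpa using X_sq i

@[simp]
theorem restrict_X_castSucc (i : Fin n) : restrict R n (X i.castSucc) = X i := by
  simp [restrict]

@[simp]
theorem restrict_X_last : restrict R n (X (Fin.last n)) = 0 := by
  simp [restrict]

end WeilDpow

open WeilDpow in
theorem weilDpow_equalizer {R : Type*} [CommRing R] (n : ℕ)
    (φ : WeilDpow R n →ₐ[R] WeilDpow R (n + 1))
    (hφ : ∀ i : Fin n,
      φ (Ideal.Quotient.mk (sqIdeal R n) (MvPolynomial.X i)) =
        Ideal.Quotient.mk (sqIdeal R (n + 1)) (MvPolynomial.X i.castSucc))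
    (ψ : WeilDpow R (n + 1) →ₐ[R] WeilDpow R (n + 1))
    (hψ₁ : ∀ i : Fin n,
      ψ (Ideal.Quotient.mk (sqIdeal R (n + 1)) (MvPolynomial.X i.castSucc)) =
        Ideal.Quotient.mk (sqIdeal R (n + 1)) (MvPolynomial.X i.castSucc))
    (hψ₂ : ψ (Ideal.Quotient.mk (sqIdeal R (n + 1)) (MvPolynomial.X (Fin.last n))) = 0) :
    Function.Injective φ ∧ ∀ a : WeilDpow R (n + 1), ψ a = a ↔ a ∈ φ.range := by
  have hleft : Function.LeftInverse (restrict R n) φ :=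
    AlgHom.congr_fun (φ₁ := (restrict R n).comp φ) (φ₂ := AlgHom.id R _)
      (algHom_ext fun i => by simp [hφ i])
  have hψ : ψ = φ.comp (restrict R n) := algHom_ext fun i => by
    induction i using Fin.lastCases with
    | last => simp [hψ₂]
    | cast i => simp [hψ₁ i, hφ i]
  refine ⟨hleft.injective, fun a => ?_⟩
  rw [hψ, ← SetLike.mem_coe, AlgHom.coe_range]
  exact hleft.apply_eq_self_iff_mem_range a
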